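/- Let Δ be a triangular configuration embedded into ℝ³ and let t be a triangle of Δ that is incident with two (distinct) cells of Δ. Then the number of cells of the configuration Δ with t removed (keeping all faces of Δ other than the 2-dimensional face t) equals the number of cells of Δ minus one. -/

import Mathlib

open scoped Classical
noncomputable section

/-- Points of `ℝ^d`. -/
abbrev Pt (d : ℕ) : Type := EuclideanSpace ℝ (Fin d)

/-- A triangular configuration embedded into `ℝ^d`: a finite geometric simplicial
complex each of whose faces has at most 3 vertices. -/
structure TriangularConfiguration (d : ℕ) where
  faces : Finset (Finset (Pt d))
  not_empty_mem : ∅ ∉ faces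
  indep : ∀ s ∈ faces, AffineIndependent ℝ ((↑) : s → Pt d)
  down_closed : ∀ s ∈ faces, ∀ u ⊆ s, u ≠ ∅ → u ∈ faces
  inter_subset_convexHull : ∀ s ∈ faces, ∀ u ∈ faces,
    convexHull ℝ (s : Set (Pt d)) ∩ convexHull ℝ (u : Set (Pt d)) ⊆
      convexHull ℝ ((s ∩ u : Finset (Pt d)) : Set (Pt d))
  card_le : ∀ s ∈ faces, s.card ≤ 3

namespace TriangularConfiguration

variable {d : ℕ}

/-- The triangles (2-dimensional faces) of a triangular configuration. -/
def triangles (Δ : TriangularConfiguration d) : Finset (Finset (Pt d)) :=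
  Δ.faces.filter fun s => s.card = 3

/-- The edges (1-dimensional faces) of a triangular configuration. -/
def edges (Δ : TriangularConfiguration d) : Finset (Finset (Pt d)) :=
  Δ.faces.filter fun s => s.card = 2

/-- The type of triangles of `Δ`. -/
abbrev Tri (Δ : TriangularConfiguration d) : Type := {t : Finset (Pt d) // t ∈ Δ.triangles}

/-- The cycle space of `Δ` over `GF(2)`: the kernel of the edge–triangle incidence
matrix of `Δ`. -/
def cycleSpace (Δ : TriangularConfiguration d) : Submodule (ZMod 2) (Δ.Tri → ZMod 2) where
  carrier := {x | ∀ e ∈ Δ.edges, (∑ t : Δ.Tri, if e ⊆ t.1 then x t else 0) = 0}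
  zero_mem' := by intro e _; simp
  add_mem' := by
    intro a b ha hb e he
    have h : (∑ t : Δ.Tri, if e ⊆ t.1 then (a + b) t else 0)
        = (∑ t : Δ.Tri, if e ⊆ t.1 then a t else 0)
          + (∑ t : Δ.Tri, if e ⊆ t.1 then b t else 0) := by
      rw [← Finset.sum_add_distrib]
      refine Finset.sum_congr rfl fun t _ => ?_
      by_cases h : e ⊆ t.1 <;> simp [h]
    rw [h, ha e he, hb e he, add_zero]
  smul_mem' := by
    intro c x hx e he
    have h : (∑ t : Δ.Tri, if e ⊆ t.1 then (c • x) t else 0)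
        = c * ∑ t : Δ.Tri, if e ⊆ t.1 then x t else 0 := by
      rw [Finset.mul_sum]
      refine Finset.sum_congr rfl fun t _ => ?_
      by_cases h : e ⊆ t.1 <;> simp [h]
    rw [h, hx e he, mul_zero]

/-- The underlying point set `|Δ|` of a triangular configuration. -/
def space (Δ : TriangularConfiguration d) : Set (Pt d) :=
  ⋃ s ∈ Δ.faces, convexHull ℝ (s : Set (Pt d))

/-- A cell of `Δ` is a connected component of `ℝ^d \ |Δ|`. -/
def IsCell (Δ : TriangularConfiguration d) (X : Set (Pt d)) : Prop :=
  ∃ x ∈ Δ.spaceᶜ, X = connectedComponentIn Δ.spaceᶜ x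

/-- The set of cells of `Δ`. -/
def cells (Δ : TriangularConfiguration d) : Set (Set (Pt d)) := {X | Δ.IsCell X}

/-- The number of cells of `Δ`. -/
def numCells (Δ : TriangularConfiguration d) : ℕ := Δ.cells.ncard

/-- A triangle `t` is incident with a cell `X` if `t ⊆ cl(X)`. -/
def IncidentCell (Δ : TriangularConfiguration d) (t : Finset (Pt d)) (X : Set (Pt d)) : Prop :=
  Δ.IsCell X ∧ convexHull ℝ (t : Set (Pt d)) ⊆ closure X

/-- A strong boundary: a triangular configuration with at least two cells, every
proper subconfiguration of which has fewer cells. -/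
def IsStrongBoundary (C : TriangularConfiguration d) : Prop :=
  2 ≤ C.numCells ∧
    ∀ C' : TriangularConfiguration d, C'.faces ⊂ C.faces → C'.numCells < C.numCells

/-- A strong boundary of `Δ`: a strong boundary that is a subconfiguration of `Δ`. -/
def IsStrongBoundaryOf (Δ C : TriangularConfiguration d) : Prop :=
  C.IsStrongBoundary ∧ C.faces ⊆ Δ.faces

/-- The inner cell `int C` of a strong boundary `C` (the union of its bounded cells;
for a strong boundary there is exactly one). -/
def intCell (C : TriangularConfiguration d) : Set (Pt d) :=
  ⋃₀ {X | C.IsCell X ∧ Bornology.IsBounded X}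

/-- The outer cell `ext C` of a strong boundary `C` (the union of its unbounded cells;
for a strong boundary there is exactly one). -/
def extCell (C : TriangularConfiguration d) : Set (Pt d) :=
  ⋃₀ {X | C.IsCell X ∧ ¬Bornology.IsBounded X}

/-- An elementary strong boundary of `Δ`. -/
def IsElementary (Δ C : TriangularConfiguration d) : Prop :=
  IsStrongBoundaryOf Δ C ∧
    ∀ C' : TriangularConfiguration d, IsStrongBoundaryOf Δ C' →
      ¬((C.intCell ∩ C'.intCell).Nonempty ∧ (C.intCell ∩ C'.extCell).Nonempty)

/-- `Δ` is connected if every two triangles of `Δ` belong to a common strong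
boundary of `Δ`. -/
def Connected (Δ : TriangularConfiguration d) : Prop :=
  ∀ t₁ ∈ Δ.triangles, ∀ t₂ ∈ Δ.triangles,
    ∃ C : TriangularConfiguration d, IsStrongBoundaryOf Δ C ∧ t₁ ∈ C.faces ∧ t₂ ∈ C.faces

/-- The characteristic vector in `GF(2)^{T(Δ)}` of a subconfiguration `C` of `Δ`. -/
def chi (Δ C : TriangularConfiguration d) : Δ.Tri → ZMod 2 :=
  fun t => if t.1 ∈ C.faces then 1 else 0

/-- The set of characteristic vectors of elementary strong boundaries of `Δ`. -/
def esbVectors (Δ : TriangularConfiguration d) : Set (Δ.Tri → ZMod 2) :=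
  {x | ∃ C : TriangularConfiguration d, IsElementary Δ C ∧ x = Δ.chi C}

/-- The configuration `Δ` with the (2-dimensional) triangle face `t` removed,
keeping all other faces of `Δ`. -/
def eraseTriangle (Δ : TriangularConfiguration d) (t : Finset (Pt d))
    (ht : t ∈ Δ.triangles) : TriangularConfiguration d where
  faces := Δ.faces.erase t
  not_empty_mem h := Δ.not_empty_mem (Finset.mem_of_mem_erase h)
  indep s hs := Δ.indep s (Finset.mem_of_mem_erase hs)
  down_closed := by
    intro s hs u hu hune
    have hsf : s ∈ Δ.faces := Finset.mem_of_mem_erase hs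
    refine Finset.mem_erase.2 ⟨?_, Δ.down_closed s hsf u hu hune⟩
    rintro rfl
    have htc : u.card = 3 := (Finset.mem_filter.1 ht).2
    have hsc : s.card ≤ 3 := Δ.card_le s hsf
    have : u = s := Finset.eq_of_subset_of_card_le hu (by omega)
    exact (Finset.mem_erase.1 hs).1 this.symm
  inter_subset_convexHull s hs u hu :=
    Δ.inter_subset_convexHull s (Finset.mem_of_mem_erase hs) u (Finset.mem_of_mem_erase hu)
  card_le s hs := Δ.card_le s (Finset.mem_of_mem_erase hs)

/-- The subconfiguration `K(E)` of `Δ` generated by a set `E` of triangles of `Δ`: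
the triangles of `E` together with all their faces. -/
def generatedBy (Δ : TriangularConfiguration d) (E : Finset (Finset (Pt d))) :
    TriangularConfiguration d where
  faces := Δ.faces.filter fun s => ∃ u ∈ E, s ⊆ u
  not_empty_mem h := Δ.not_empty_mem (Finset.mem_filter.1 h).1
  indep s hs := Δ.indep s (Finset.mem_filter.1 hs).1
  down_closed := by
    intro s hs u hu hune
    have h := Finset.mem_filter.1 hs
    obtain ⟨w, hw, hsw⟩ := h.2
    exact Finset.mem_filter.2 ⟨Δ.down_closed s h.1 u hu hune, w, hw, hu.trans hsw⟩
  inter_subset_convexHull s hs u hu :=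
    Δ.inter_subset_convexHull s (Finset.mem_filter.1 hs).1 u (Finset.mem_filter.1 hu).1
  card_le s hs := Δ.card_le s (Finset.mem_filter.1 hs).1

end TriangularConfiguration

/-- A binary linear code (given as a subspace of `GF(2)^ι`) has a 2-basis if it has a
basis in which every coordinate is non-zero in at most two basis vectors. -/
def HasTwoBasis {ι : Type*} (C : Submodule (ZMod 2) (ι → ZMod 2)) : Prop :=
  ∃ B : Finset (ι → ZMod 2),
    LinearIndependent (ZMod 2) (fun b : {x // x ∈ B} => (b : ι → ZMod 2)) ∧
    Submodule.span (ZMod 2) (B : Set (ι → ZMod 2)) = C ∧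
    ∀ i : ι, (B.filter fun b => b i ≠ 0).card ≤ 2

/-- A binary linear code `C ⊆ GF(2)^n` has a geometric representation embeddable into
`ℝ^d` if there is a triangular configuration `Δ` embedded in `ℝ^d` such that
`C = ker Δ / S` for some set `S` of triangles of `Δ` (the coordinates outside `S`
being enumerated by an injection `g`) and `dim C = dim ker Δ`. -/
def HasGeomRep (d n : ℕ) (C : Submodule (ZMod 2) (Fin n → ZMod 2)) : Prop :=
  ∃ (Δ : TriangularConfiguration d) (g : Fin n → Δ.Tri),
    Function.Injective g ∧
    C = Δ.cycleSpace.map (LinearMap.funLeft (ZMod 2) (ZMod 2) g) ∧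
    Module.finrank (ZMod 2) C = Module.finrank (ZMod 2) Δ.cycleSpace

/-- The cut space of a finite graph (possibly with loops and parallel edges) whose `n`
edges are given by their endpoints `ends : Fin n → Sym2 V`: the span of the incidence
vectors `χ(E(v))`, where `χ(E(v)) i = 1` iff edge `i` is a non-loop edge incident with `v`. -/
def cutSpace {V : Type} [Fintype V] {n : ℕ} (ends : Fin n → Sym2 V) :
    Submodule (ZMod 2) (Fin n → ZMod 2) :=
  Submodule.span (ZMod 2)
    {x | ∃ v : V, x = fun i => if v ∈ ends i ∧ ¬(ends i).IsDiag then (1 : ZMod 2) else 0}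

/-!
Removing `t` adds to the complement of `|Δ|` the set `R` of points of `t` covered by no other
face; `R` contains the centroid of `t`, by affine independence. Near a point of `R`, `|Δ|` lies
in the plane of `t`, so only the cells of the two open half-balls there can approach it; hence
the cells approaching `R` are exactly `X₁` and `X₂`. In the complement of `|Δ - t|` these two
merge through `R` into a single cell, and every other cell of `Δ` stays a cell.
-/

open Set Metric

theorem Set.ncard_insert_diff_pair {α : Type*} {S : Set α} {a b c : α} (ha : a ∈ S) (hb : b ∈ S)
    (hab : a ≠ b) (hc : c ∉ S) : (insert c (S \ {a, b})).ncard = S.ncard - 1 := by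
  rcases S.finite_or_infinite with hS | hS
  · rw [ncard_insert_of_notMem (fun h => hc h.1) hS.sdiff, ncard_sdiff (pair_subset ha hb),
      ncard_pair hab]
    have := ncard_le_ncard (pair_subset ha hb) hS
    rw [ncard_pair hab] at this
    omega
  · rw [hS.ncard, ((hS.sdiff (toFinite _)).mono (subset_insert _ _)).ncard]

section Components

variable {E : Type*} [TopologicalSpace E]

def componentsIn (U : Set E) : Set (Set E) :=
  {V | ∃ x ∈ U, V = connectedComponentIn U x}

lemma eq_connectedComponentIn_of_mem_componentsIn {U V : Set E} (hV : V ∈ componentsIn U)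
    {x : E} (hx : x ∈ V) : V = connectedComponentIn U x := by
  obtain ⟨y, -, rfl⟩ := hV
  exact connectedComponentIn_eq hx

lemma nonempty_of_mem_componentsIn {U V : Set E} (hV : V ∈ componentsIn U) : V.Nonempty := by
  obtain ⟨x, hx, rfl⟩ := hV
  exact ⟨x, mem_connectedComponentIn hx⟩

lemma connectedComponentIn_eq_of_subset {U U' : Set E} (hUU' : U ⊆ U') {x : E} (hx : x ∈ U)
    (h : connectedComponentIn U' x ⊆ U) :
    connectedComponentIn U' x = connectedComponentIn U x :=
  (isPreconnected_connectedComponentIn.subset_connectedComponentIn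
    (mem_connectedComponentIn (hUU' hx)) h).antisymm (connectedComponentIn_mono x hUU')

lemma subset_connectedComponentIn_of_mem_closure {X U : Set E}
    (hX : IsPreconnected X) (hXU : X ⊆ U) {q : E} (hqU : q ∈ U) (hqX : q ∈ closure X) :
    X ⊆ connectedComponentIn U q := by
  have hqX' : IsPreconnected (insert q X) :=
    hX.subset_closure (subset_insert q X) (insert_subset hqX subset_closure)
  exact (subset_insert q X).trans <|
    hqX'.subset_connectedComponentIn (mem_insert q X) (insert_subset hqU hXU)

variable [LocallyConnectedSpace E]

lemma isOpen_of_mem_componentsIn {U V : Set E} (hU : IsOpen U) (hV : V ∈ componentsIn U) :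
    IsOpen V := by
  obtain ⟨x, -, rfl⟩ := hV
  exact hU.connectedComponentIn

lemma closure_connectedComponentIn_inter_subset {U : Set E} (hU : IsOpen U) (x : E) :
    closure (connectedComponentIn U x) ∩ U ⊆ connectedComponentIn U x := by
  rintro y ⟨hy, hyU⟩
  obtain ⟨z, hzy, hzx⟩ :=
    mem_closure_iff.1 hy _ hU.connectedComponentIn (mem_connectedComponentIn hyU)
  rw [connectedComponentIn_eq hzx, ← connectedComponentIn_eq hzy]
  exact mem_connectedComponentIn hyU

lemma connectedComponentIn_union_eq_of_disjoint_closure {U R : Set E} (hU : IsOpen U) {x : E}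
    (hx : x ∈ U) (hR : Disjoint (closure (connectedComponentIn U x)) R) :
    connectedComponentIn (U ∪ R) x = connectedComponentIn U x := by
  refine connectedComponentIn_eq_of_subset subset_union_left hx <|
    (isPreconnected_connectedComponentIn.subset_of_closure_inter_subset hU.connectedComponentIn
      ⟨x, mem_connectedComponentIn (Or.inl hx), mem_connectedComponentIn hx⟩ ?_).trans
      (connectedComponentIn_subset U x)
  rintro y ⟨hy, hyUR⟩
  refine closure_connectedComponentIn_inter_subset hU x ⟨hy, ?_⟩
  exact (connectedComponentIn_subset _ x hyUR).resolve_right (hR.notMem_of_mem_left hy)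

theorem componentsIn_union_eq {U R X₁ X₂ : Set E} (hU : IsOpen U)
    (h₁ : X₁ ∈ componentsIn U) (h₂ : X₂ ∈ componentsIn U)
    (hR₁ : R ⊆ closure X₁) (hR₂ : R ⊆ closure X₂)
    (hsides : ∀ V ∈ componentsIn U, (closure V ∩ R).Nonempty → V = X₁ ∨ V = X₂)
    {p : E} (hp : p ∈ R) :
    componentsIn (U ∪ R) =
      insert (connectedComponentIn (U ∪ R) p) (componentsIn U \ {X₁, X₂}) := by
  set W := connectedComponentIn (U ∪ R) p
  have hsub : ∀ X ∈ componentsIn U, ∀ q ∈ R, q ∈ closure X →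
      X ⊆ connectedComponentIn (U ∪ R) q := by
    rintro X ⟨x, -, rfl⟩ q hq hqX
    exact subset_connectedComponentIn_of_mem_closure isPreconnected_connectedComponentIn
      ((connectedComponentIn_subset U x).trans subset_union_left) (Or.inr hq) hqX
  have hXW : ∀ X ∈ componentsIn U, R ⊆ closure X → X ⊆ W := fun X hX hRX =>
    hsub X hX p hp (hRX hp)
  -- every point of `R` is adherent to `X₁`, so `R` lies in the single component `W`
  have hRW : ∀ q ∈ R, connectedComponentIn (U ∪ R) q = W := by
    intro q hq
    obtain ⟨x, hx⟩ := nonempty_of_mem_componentsIn h₁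
    rw [connectedComponentIn_eq (hsub X₁ h₁ q hq (hR₁ hq) hx),
      ← connectedComponentIn_eq (hXW X₁ h₁ hR₁ hx)]
  ext V
  constructor
  · rintro ⟨x, hx, rfl⟩
    by_cases hxW : connectedComponentIn (U ∪ R) x = W
    · exact Or.inl hxW
    have hVU : connectedComponentIn (U ∪ R) x ⊆ U := fun y hy =>
      (connectedComponentIn_subset _ x hy).resolve_right fun hyR =>
        hxW (by rw [connectedComponentIn_eq hy, hRW y hyR])
    have hxU : x ∈ U := hVU (mem_connectedComponentIn hx)
    rw [connectedComponentIn_eq_of_subset subset_union_left hxU hVU]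
    refine Or.inr ⟨⟨x, hxU, rfl⟩, ?_⟩
    have hxX : ∀ X ∈ componentsIn U, R ⊆ closure X → connectedComponentIn U x ≠ X := by
      rintro X hX hRX rfl
      exact hxW (connectedComponentIn_eq (hXW _ hX hRX (mem_connectedComponentIn hxU))).symm
    rintro (h | h)
    exacts [hxX X₁ h₁ hR₁ h, hxX X₂ h₂ hR₂ h]
  · rintro (rfl | ⟨⟨x, hx, rfl⟩, hV⟩)
    · exact ⟨p, Or.inr hp, rfl⟩
    refine ⟨x, Or.inl hx, (connectedComponentIn_union_eq_of_disjoint_closure hU hx ?_).symm⟩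
    rw [disjoint_iff_inter_eq_empty, ← not_nonempty_iff_eq_empty]
    exact fun hmeets => hV (hsides _ ⟨x, hx, rfl⟩ hmeets)

theorem ncard_componentsIn_union {U R X₁ X₂ : Set E} (hU : IsOpen U) (hRU : Disjoint R U)
    (h₁ : X₁ ∈ componentsIn U) (h₂ : X₂ ∈ componentsIn U) (hne : X₁ ≠ X₂)
    (hR₁ : R ⊆ closure X₁) (hR₂ : R ⊆ closure X₂)
    (hsides : ∀ V ∈ componentsIn U, (closure V ∩ R).Nonempty → V = X₁ ∨ V = X₂)
    (hR : R.Nonempty) :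
    (componentsIn (U ∪ R)).ncard = (componentsIn U).ncard - 1 := by
  obtain ⟨p, hp⟩ := hR
  rw [componentsIn_union_eq hU h₁ h₂ hR₁ hR₂ hsides hp]
  refine Set.ncard_insert_diff_pair h₁ h₂ hne ?_
  rintro ⟨x, -, hW⟩
  exact hRU.notMem_of_mem_left hp
    (connectedComponentIn_subset U x (hW ▸ mem_connectedComponentIn (Or.inr hp)))

end Components

section Sides

variable {E : Type*} [NormedAddCommGroup E] [NormedSpace ℝ E]

lemma exists_mem_inter_ball_apply_ne {V : Set E} (hV : IsOpen V) {q : E} (hq : q ∈ closure V)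
    {ε : ℝ} (hε : 0 < ε) {g : E →L[ℝ] ℝ} (hg : g ≠ 0) (c : ℝ) :
    ∃ x ∈ V ∩ ball q ε, g x ≠ c := by
  by_contra! h
  obtain ⟨x, hxq, hxV⟩ := mem_closure_iff.1 hq _ isOpen_ball (mem_ball_self hε)
  have hne : (V ∩ ball q ε).Nonempty := ⟨x, hxV, hxq⟩
  have hc : g '' (V ∩ ball q ε) = {c} :=
    (hne.image g).subset_singleton_iff.1 (image_subset_iff.2 h)
  exact not_isOpen_singleton c (hc ▸ g.isOpenMap_of_ne_zero hg _ (hV.inter isOpen_ball))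

lemma connectedComponentIn_compl_eq_of_lt_iff_lt {F : Set E} {q : E} {ε : ℝ} {g : E →L[ℝ] ℝ}
    {c : ℝ} (hF : ball q ε ∩ F ⊆ {x | g x = c}) {x y : E} (hx : x ∈ ball q ε)
    (hy : y ∈ ball q ε) (hgx : g x ≠ c) (hgy : g y ≠ c) (hxy : c < g x ↔ c < g y) :
    connectedComponentIn Fᶜ x = connectedComponentIn Fᶜ y := by
  have hconv : ∀ S : Set E, Convex ℝ S → S ⊆ ball q ε → (∀ z ∈ S, g z ≠ c) → x ∈ S → y ∈ S →
      connectedComponentIn Fᶜ x = connectedComponentIn Fᶜ y := by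
    intro S hS hSq hSg hxS hyS
    refine connectedComponentIn_eq <| hS.isPreconnected.subset_connectedComponentIn hxS
      (fun z hz hzF => hSg z hz (hF ⟨hSq hz, hzF⟩)) hyS
  rcases hgx.lt_or_gt with hlt | hlt
  · have hly : g y < c := hgy.lt_or_gt.resolve_right fun h => hlt.not_gt (hxy.2 h)
    exact hconv (ball q ε ∩ {z | g z < c}) ((convex_ball q ε).inter
      (convex_halfSpace_lt g.toLinearMap.isLinear c)) inter_subset_left
      (fun z hz => hz.2.ne) ⟨hx, hlt⟩ ⟨hy, hly⟩
  · exact hconv (ball q ε ∩ {z | c < g z}) ((convex_ball q ε).inter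
      (convex_halfSpace_gt g.toLinearMap.isLinear c)) inter_subset_left
      (fun z hz => hz.2.ne') ⟨hx, hlt⟩ ⟨hy, hxy.1 hlt⟩

theorem eq_or_eq_or_eq_of_mem_closure {F : Set E} (hF : IsClosed F) {q : E} {ε : ℝ}
    (hε : 0 < ε) {g : E →L[ℝ] ℝ} (hg : g ≠ 0) {c : ℝ} (hFq : ball q ε ∩ F ⊆ {x | g x = c})
    {V₁ V₂ V₃ : Set E} (h₁ : V₁ ∈ componentsIn Fᶜ) (h₂ : V₂ ∈ componentsIn Fᶜ)
    (h₃ : V₃ ∈ componentsIn Fᶜ) (hq₁ : q ∈ closure V₁) (hq₂ : q ∈ closure V₂)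
    (hq₃ : q ∈ closure V₃) :
    V₁ = V₂ ∨ V₁ = V₃ ∨ V₂ = V₃ := by
  have hpoint : ∀ V ∈ componentsIn Fᶜ, q ∈ closure V →
      ∃ x ∈ ball q ε, g x ≠ c ∧ V = connectedComponentIn Fᶜ x := by
    intro V hV hqV
    obtain ⟨x, ⟨hxV, hxq⟩, hgx⟩ := exists_mem_inter_ball_apply_ne
      (isOpen_of_mem_componentsIn hF.isOpen_compl hV) hqV hε hg c
    exact ⟨x, hxq, hgx, eq_connectedComponentIn_of_mem_componentsIn hV hxV⟩
  obtain ⟨x₁, hx₁, hg₁, rfl⟩ := hpoint V₁ h₁ hq₁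
  obtain ⟨x₂, hx₂, hg₂, rfl⟩ := hpoint V₂ h₂ hq₂
  obtain ⟨x₃, hx₃, hg₃, rfl⟩ := hpoint V₃ h₃ hq₃
  by_cases h₁₂ : c < g x₁ ↔ c < g x₂
  · exact Or.inl (connectedComponentIn_compl_eq_of_lt_iff_lt hFq hx₁ hx₂ hg₁ hg₂ h₁₂)
  by_cases h₁₃ : c < g x₁ ↔ c < g x₃
  · exact Or.inr (Or.inl (connectedComponentIn_compl_eq_of_lt_iff_lt hFq hx₁ hx₃ hg₁ hg₃ h₁₃))
  exact Or.inr (Or.inr (connectedComponentIn_compl_eq_of_lt_iff_lt hFq hx₂ hx₃ hg₂ hg₃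
    (by tauto)))

end Sides

theorem Finset.centroid_notMem_affineSpan_of_ssubset {k V P : Type*} [Field k] [CharZero k]
    [AddCommGroup V] [Module k V] [AddTorsor V P] {t u : Finset P}
    (ht : AffineIndependent k ((↑) : t → P)) (hu : u ⊂ t) :
    t.centroid k id ∉ affineSpan k (u : Set P) := by
  obtain ⟨v, hvt, hvu⟩ := Finset.exists_of_ssubset hu
  have hu' : (u : Set P) = ((↑) : t → P) '' {i | i.1 ∈ u} := by
    ext x
    exact ⟨fun hx => ⟨⟨x, hu.subset hx⟩, hx, rfl⟩, by rintro ⟨i, hi, rfl⟩; exact hi⟩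
  rw [← Finset.centroid_univ, Finset.centroid_def, hu']
  intro h
  have := ht.eq_zero_of_affineCombination_mem_affineSpan
    (Finset.sum_centroidWeights_eq_one_of_nonempty k _ ⟨⟨v, hvt⟩, Finset.mem_univ _⟩) h
    (Finset.mem_univ ⟨v, hvt⟩) hvu
  exact Finset.ne_empty_of_mem hvt (by simpa [Finset.centroidWeights_apply] using this :)

theorem Finset.exists_ne_zero_affineSpan_subset {E : Type*} [NormedAddCommGroup E]
    [NormedSpace ℝ E] [FiniteDimensional ℝ E] {t : Finset E} (ht₀ : t.Nonempty)
    (ht : t.card ≤ Module.finrank ℝ E) :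
    ∃ g : E →L[ℝ] ℝ, g ≠ 0 ∧ ∃ c, (affineSpan ℝ (t : Set E) : Set E) ⊆ {x | g x = c} := by
  obtain ⟨a, ha⟩ := ht₀
  have hrank : Module.finrank ℝ (vectorSpan ℝ (t : Set E)) < Module.finrank ℝ E := by
    have hcard := t.card_pos.2 ⟨a, ha⟩
    have := finrank_vectorSpan_image_finset_le ℝ id t (n := t.card - 1) (by omega)
    rw [Finset.image_id] at this
    omega
  obtain ⟨f, hf, hle⟩ := (vectorSpan ℝ (t : Set E)).exists_le_ker_of_lt_top
    (Submodule.lt_top_of_finrank_lt_finrank hrank)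
  refine ⟨LinearMap.toContinuousLinearMap f, (LinearEquiv.map_ne_zero_iff _).2 hf, f a,
    fun x hx => ?_⟩
  have hxa : x -ᵥ a ∈ vectorSpan ℝ (t : Set E) := by
    rw [← direction_affineSpan]
    exact AffineSubspace.vsub_mem_direction hx (subset_affineSpan ℝ _ ha)
  simpa [sub_eq_zero] using hle hxa

namespace TriangularConfiguration

variable {d : ℕ}

lemma numCells_eq_ncard_componentsIn (Δ : TriangularConfiguration d) :
    Δ.numCells = (componentsIn Δ.spaceᶜ).ncard :=
  rfl

lemma nonempty_of_mem_triangles (Δ : TriangularConfiguration d) {t : Finset (Pt d)}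
    (ht : t ∈ Δ.triangles) : t.Nonempty :=
  Finset.card_pos.1 (by rw [(Finset.mem_filter.1 ht).2]; norm_num)

lemma isClosed_space (Δ : TriangularConfiguration d) : IsClosed Δ.space :=
  Δ.faces.finite_toSet.isClosed_biUnion fun s _ =>
    ((s : Set (Pt d)).toFinite.isCompact_convexHull ℝ).isClosed

lemma space_eraseTriangle_union (Δ : TriangularConfiguration d) {t : Finset (Pt d)}
    (ht : t ∈ Δ.triangles) :
    (Δ.eraseTriangle t ht).space ∪ convexHull ℝ (t : Set (Pt d)) = Δ.space := by
  rw [space, space, union_comm, show (Δ.eraseTriangle t ht).faces = Δ.faces.erase t from rfl,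
    ← Finset.set_biUnion_insert t _ fun s => convexHull ℝ (s : Set (Pt d)),
    Finset.insert_erase (Finset.mem_filter.1 ht).1]

lemma compl_space_eraseTriangle (Δ : TriangularConfiguration d) {t : Finset (Pt d)}
    (ht : t ∈ Δ.triangles) :
    (Δ.eraseTriangle t ht).spaceᶜ =
      Δ.spaceᶜ ∪ (convexHull ℝ (t : Set (Pt d)) \ (Δ.eraseTriangle t ht).space) := by
  rw [← space_eraseTriangle_union Δ ht]
  ext x
  simp only [mem_compl_iff, mem_union, mem_sdiff]
  tauto

lemma centroid_notMem_space_eraseTriangle (Δ : TriangularConfiguration d) {t : Finset (Pt d)}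
    (ht : t ∈ Δ.triangles) : t.centroid ℝ id ∉ (Δ.eraseTriangle t ht).space := by
  obtain ⟨htf, htcard⟩ := Finset.mem_filter.1 ht
  intro h
  obtain ⟨s, hs, hxs⟩ := mem_iUnion₂.1 h
  obtain ⟨hst, hsf⟩ := Finset.mem_erase.1 hs
  have hssub : s ∩ t ⊂ t := by
    refine Finset.inter_subset_right.ssubset_of_ne fun hts => hst ?_
    exact (Finset.eq_of_subset_of_card_le (Finset.inter_eq_right.1 hts)
      (htcard ▸ Δ.card_le s hsf)).symm
  have hx := Δ.inter_subset_convexHull s hsf t htf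
    ⟨hxs, t.centroid_mem_convexHull (Δ.nonempty_of_mem_triangles ht)⟩
  exact Finset.centroid_notMem_affineSpan_of_ssubset (Δ.indep t htf) hssub
    (convexHull_subset_affineSpan _ hx)

theorem IncidentCell.eq_or_eq_of_closure_inter_nonempty {Δ : TriangularConfiguration d}
    (hd : 3 ≤ d) {t : Finset (Pt d)} (ht : t ∈ Δ.triangles) {X₁ X₂ V : Set (Pt d)}
    (h₁ : Δ.IncidentCell t X₁) (h₂ : Δ.IncidentCell t X₂) (hne : X₁ ≠ X₂) (hV : Δ.IsCell V)
    (hVt : (closure V ∩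
      (convexHull ℝ (t : Set (Pt d)) \ (Δ.eraseTriangle t ht).space)).Nonempty) :
    V = X₁ ∨ V = X₂ := by
  obtain ⟨q, hqV, hqt, hqΔ'⟩ := hVt
  obtain ⟨g, hg, c, hgc⟩ := t.exists_ne_zero_affineSpan_subset
    (Δ.nonempty_of_mem_triangles ht) (by simpa [(Finset.mem_filter.1 ht).2] using hd)
  obtain ⟨ε, hε, hball⟩ := Metric.isOpen_iff.1 (isClosed_space _).isOpen_compl q hqΔ'
  have hsep : ball q ε ∩ Δ.space ⊆ {x | g x = c} := by
    rw [← space_eraseTriangle_union Δ ht]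
    rintro x ⟨hxq, hx | hx⟩
    exacts [absurd hx (hball hxq), hgc (convexHull_subset_affineSpan _ hx)]
  rcases eq_or_eq_or_eq_of_mem_closure Δ.isClosed_space hε hg hsep h₁.1 h₂.1 hV (h₁.2 hqt)
    (h₂.2 hqt) hqV with h | h | h
  exacts [absurd h hne, Or.inl h.symm, Or.inr h.symm]

end TriangularConfiguration

/-- If a triangle `t` of `Δ` (embedded into `ℝ³`) is incident with two
distinct cells of `Δ`, then removing `t` from `Δ` decreases the number of cells by one. -/
theorem numCells_eraseTriangle (Δ : TriangularConfiguration 3)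
    (t : Finset (Pt 3)) (ht : t ∈ Δ.triangles)
    (X₁ X₂ : Set (Pt 3)) (h₁ : Δ.IncidentCell t X₁) (h₂ : Δ.IncidentCell t X₂)
    (hne : X₁ ≠ X₂) :
    (Δ.eraseTriangle t ht).numCells = Δ.numCells - 1 := by
  set R := convexHull ℝ (t : Set (Pt 3)) \ (Δ.eraseTriangle t ht).space
  have hR : Disjoint R Δ.spaceᶜ := by
    rw [← Δ.space_eraseTriangle_union ht]
    exact disjoint_compl_right.mono_left (sdiff_subset.trans subset_union_right)
  rw [Δ.numCells_eq_ncard_componentsIn, (Δ.eraseTriangle t ht).numCells_eq_ncard_componentsIn,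
    Δ.compl_space_eraseTriangle ht]
  exact ncard_componentsIn_union Δ.isClosed_space.isOpen_compl hR h₁.1 h₂.1 hne
    (sdiff_subset.trans h₁.2) (sdiff_subset.trans h₂.2)
    (fun V hV => h₁.eq_or_eq_of_closure_inter_nonempty le_rfl ht h₂ hne hV)
    ⟨_, t.centroid_mem_convexHull (Δ.nonempty_of_mem_triangles ht),
      Δ.centroid_notMem_space_eraseTriangle ht⟩
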